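/- arXiv:2308.15666 — 2 statements merged into one kernel-verified Lean document; each statement's English description precedes it below -/
import Mathlib

section
/- Let X, Y be real Hilbert spaces, A : X → Y a bounded linear operator with a diagonal frame decomposition (u_λ, v_λ, κ_λ)_{λ∈Λ}, sup_λ κ_λ < ∞, and let (ū_λ)_λ be a dual frame of (u_λ)_λ whose synthesis operator T_ū : ℓ²(Λ) → X is bounded. Let (φ_α)_{α>0} be a non-linear regularizing filter satisfying Assumption B and define B_α(y) := ∑_λ κ_λ⁻¹ φ_α(κ_λ, ⟨y, v_λ⟩) ū_λ. Fix α > 0 and let y^δ, y^k ∈ Y with y^k → y^δ in norm. Then B_α(y^k) and B_α(y^δ) are well defined and B_α(y^k) converges weakly to B_α(y^δ) in X, i.e. ⟨B_α(y^k), w⟩ → ⟨B_α(y^δ), w⟩ for every w ∈ X. -/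
/-!
By nonexpansiveness and (B2), `|φ_α(κ,x)/κ| ≤ (C₁ + C₂|x|)|x|` uniformly in `κ`: below the
threshold `|x| ≤ dα/κ` this is (B2), above it `|φ_α(κ,x)| ≤ |x| ≤ |x|²κ/(dα)`. So the filtered
coefficients of `y` are dominated by its frame coefficients `⟨y, v_λ⟩`, which form an `ℓ²`
vector of norm at most `√b‖y‖` (the upper frame bound applied to the projection of `y` onto
the closure of `ran A`). Hence the coefficient vectors of `y^k` are bounded in `ℓ²`, and they
converge coordinatewise because each `φ_α(κ,·)` is continuous. A bounded, coordinatewise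
convergent sequence in `ℓ²` converges weakly (test against finitely supported vectors, which
are dense, and use equicontinuity), and the bounded operator `T` preserves weak convergence.
-/

open scoped ENNReal RealInnerProductSpace
open Filter

noncomputable section

/-- A non-linear regularizing filter: `φ α κ` is (F1) monotone, (F2) nonexpansive,
(F3) zero at zero, and (F4) converges pointwise to the identity as `α → 0`. -/
def IsRegFilter (φ : ℝ → ℝ → ℝ → ℝ) : Prop :=
  (∀ α > (0 : ℝ), ∀ κ > (0 : ℝ), Monotone (φ α κ)) ∧
  (∀ α > (0 : ℝ), ∀ κ > (0 : ℝ), ∀ x y : ℝ, |φ α κ x - φ α κ y| ≤ |x - y|) ∧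
  (∀ α > (0 : ℝ), ∀ κ > (0 : ℝ), φ α κ 0 = 0) ∧
  (∀ κ > (0 : ℝ), ∀ c : ℝ,
    Tendsto (fun α => φ α κ c) (nhdsWithin 0 (Set.Ioi 0)) (nhds c))

/-- Assumption B: (B1) `α ↦ |φ_α(κ,x)|` increases as `α` decreases, and (B2) there are
`d, e > 0` with `|φ_α(κ,x)| ≤ (eκ/√α)·|x|` whenever `|x| ≤ dα/κ`. -/
def AssumptionB (φ : ℝ → ℝ → ℝ → ℝ) : Prop :=
  (∀ κ > (0 : ℝ), ∀ x : ℝ, ∀ α β : ℝ, 0 < α → α ≤ β → |φ β κ x| ≤ |φ α κ x|) ∧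
  (∃ d > (0 : ℝ), ∃ e > (0 : ℝ), ∀ κ > (0 : ℝ), ∀ α > (0 : ℝ), ∀ x : ℝ,
    |x| ≤ d * α / κ → |φ α κ x| ≤ e * κ / Real.sqrt α * |x|)

theorem IsRegFilter.abs_le {φ : ℝ → ℝ → ℝ → ℝ} (hφ : IsRegFilter φ) {α κ : ℝ} (hα : 0 < α)
    (hκ : 0 < κ) (x : ℝ) : |φ α κ x| ≤ |x| := by
  simpa [hφ.2.2.1 α hα κ hκ] using hφ.2.1 α hα κ hκ x 0

theorem IsRegFilter.continuous {φ : ℝ → ℝ → ℝ → ℝ} (hφ : IsRegFilter φ) {α κ : ℝ} (hα : 0 < α)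
    (hκ : 0 < κ) : Continuous (φ α κ) :=
  (LipschitzWith.of_dist_le_mul (K := 1) fun x y => by
    simpa [Real.dist_eq] using hφ.2.1 α hα κ hκ x y).continuous

theorem IsRegFilter.exists_abs_div_le {φ : ℝ → ℝ → ℝ → ℝ} (hφ : IsRegFilter φ)
    (hB : AssumptionB φ) {α : ℝ} (hα : 0 < α) :
    ∃ C₁ C₂ : ℝ, 0 ≤ C₁ ∧ 0 ≤ C₂ ∧
      ∀ κ > (0 : ℝ), ∀ x : ℝ, |φ α κ x / κ| ≤ (C₁ + C₂ * |x|) * |x| := by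
  obtain ⟨-, d, hd, e, he, hsmall⟩ := hB
  refine ⟨e / √α, 1 / (d * α), by positivity, by positivity, fun κ hκ x => ?_⟩
  have hdα : 0 < d * α := by positivity
  rw [abs_div, abs_of_pos hκ, div_le_iff₀ hκ]
  rcases le_or_gt |x| (d * α / κ) with hx | hx
  · calc |φ α κ x| ≤ e * κ / √α * |x| := hsmall κ hκ α hα x hx
      _ = e / √α * |x| * κ := by ring
      _ ≤ (e / √α + 1 / (d * α) * |x|) * |x| * κ := by
        gcongr; exact le_add_of_nonneg_right (by positivity)
  · have hx' : 1 ≤ 1 / (d * α) * |x| * κ := by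
      rw [div_lt_iff₀ hκ] at hx
      rw [show 1 / (d * α) * |x| * κ = |x| * κ / (d * α) by ring, le_div_iff₀ hdα]
      linarith
    calc |φ α κ x| ≤ |x| := hφ.abs_le hα hκ x
      _ ≤ 1 / (d * α) * |x| * κ * |x| := le_mul_of_one_le_left (abs_nonneg x) hx'
      _ ≤ (e / √α + 1 / (d * α) * |x|) * |x| * κ := by
        nlinarith [abs_nonneg x, show 0 ≤ e / √α * |x| * κ by positivity]

theorem memℓp_two_iff_summable_sq {Λ : Type*} (f : Λ → ℝ) :
    Memℓp f 2 ↔ Summable fun l => f l ^ 2 := by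
  simp [memℓp_gen_iff (p := 2) (by norm_num), sq_abs]

theorem lp.norm_le_of_tsum_sq_le {Λ : Type*} {f : lp (fun _ : Λ => ℝ) 2} {C : ℝ} (hC : 0 ≤ C)
    (hf : ∑' l, f l ^ 2 ≤ C ^ 2) : ‖f‖ ≤ C :=
  lp.norm_le_of_tsum_le (by norm_num) hC (by simpa [Real.rpow_two, sq_abs] using hf)

theorem exists_memℓp_inner_norm_le_of_frame_upper_bound {Y Λ : Type*} [NormedAddCommGroup Y]
    [InnerProductSpace ℝ Y] (K : Submodule ℝ Y) [K.HasOrthogonalProjection] {v : Λ → Y}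
    (hv : ∀ l, v l ∈ K) {b : ℝ} (hb : 0 ≤ b)
    (hframe : ∀ y ∈ K, Summable (fun l => ⟪y, v l⟫ ^ 2) ∧ ∑' l, ⟪y, v l⟫ ^ 2 ≤ b * ‖y‖ ^ 2)
    (y : Y) :
    ∃ h : Memℓp (fun l => ⟪y, v l⟫) 2, ‖(⟨_, h⟩ : lp (fun _ : Λ => ℝ) 2)‖ ≤ √b * ‖y‖ := by
  set Py := K.starProjection y
  have hinner : (fun l => ⟪y, v l⟫) = fun l => ⟪Py, v l⟫ := funext fun l => by
    have := K.starProjection_inner_eq_zero y (v l) (hv l)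
    rwa [inner_sub_left, sub_eq_zero] at this
  obtain ⟨hsum, hle⟩ := hframe Py (K.starProjection_apply_mem y)
  rw [hinner]
  refine ⟨(memℓp_two_iff_summable_sq _).2 hsum, lp.norm_le_of_tsum_sq_le (by positivity) ?_⟩
  have hPy : ‖Py‖ ≤ ‖y‖ := K.norm_starProjection_apply_le y
  calc ∑' l, ⟪Py, v l⟫ ^ 2 ≤ b * ‖Py‖ ^ 2 := hle
    _ ≤ b * ‖y‖ ^ 2 := by gcongr
    _ = (√b * ‖y‖) ^ 2 := by rw [mul_pow, Real.sq_sqrt hb]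

theorem lp.exists_norm_le_of_abs_le_quadratic {Λ : Type*} (a : lp (fun _ : Λ => ℝ) 2)
    {g : Λ → ℝ} {C₁ C₂ : ℝ} (hC₁ : 0 ≤ C₁) (hC₂ : 0 ≤ C₂)
    (hg : ∀ l, |g l| ≤ (C₁ + C₂ * |a l|) * |a l|) :
    ∃ h : Memℓp g 2, ‖(⟨g, h⟩ : lp (fun _ : Λ => ℝ) 2)‖ ≤ (C₁ + C₂ * ‖a‖) * ‖a‖ := by
  have hc : 0 ≤ C₁ + C₂ * ‖a‖ := by positivity
  have hle : ∀ l, ‖g l‖ ≤ ‖((C₁ + C₂ * ‖a‖) • a) l‖ := fun l => by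
    rw [lp.coeFn_smul, Pi.smul_apply, norm_smul, Real.norm_of_nonneg hc, Real.norm_eq_abs,
      Real.norm_eq_abs]
    have hal : |a l| ≤ ‖a‖ := by simpa using lp.norm_apply_le_norm two_ne_zero a l
    exact (hg l).trans (by gcongr)
  refine ⟨(lp.memℓp _).mono' hle, ?_⟩
  calc _ ≤ ‖(C₁ + C₂ * ‖a‖) • a‖ := lp.norm_mono two_ne_zero hle
    _ = (C₁ + C₂ * ‖a‖) * ‖a‖ := by rw [norm_smul, Real.norm_of_nonneg hc]

section WeakConvergence

variable {𝕜 ι Λ : Type*} [RCLike 𝕜] {G : Λ → Type*} [∀ l, NormedAddCommGroup (G l)]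
  [∀ l, InnerProductSpace 𝕜 (G l)] {L : Filter ι} {ξ : ι → lp G 2} {ξ₀ : lp G 2}

theorem lp.tendsto_inner_of_tendsto_apply (hbdd : ∃ C, ∀ k, ‖ξ k‖ ≤ C)
    (hξ : ∀ l, Tendsto (fun k => ξ k l) L (nhds (ξ₀ l))) (z : lp G 2) :
    Tendsto (fun k => inner 𝕜 (ξ k) z) L (nhds (inner 𝕜 ξ₀ z)) := by
  classical
  obtain ⟨C, hC⟩ := hbdd
  have hequi : Equicontinuous ((↑) ∘ fun k => innerSL 𝕜 (ξ k)) :=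
    ((NormedSpace.equicontinuous_TFAE fun k => innerSL 𝕜 (ξ k)).out 5 1).1
      (⟨C, fun k => (innerSL_apply_norm 𝕜 (ξ k)).trans_le (hC k)⟩ :
        ∃ C, ∀ k, ‖innerSL 𝕜 (ξ k)‖ ≤ C)
  have hclosed := hequi.isClosed_setOfPred_tendsto (l := L) (innerSL 𝕜 ξ₀).continuous
  refine hclosed.mem_of_tendsto (lp.hasSum_single ENNReal.ofNat_ne_top z)
    (Eventually.of_forall fun s => ?_)
  simp only [Set.mem_ofPred_eq, Function.comp_apply, innerSL_apply_apply, inner_sum,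
    lp.inner_single_right]
  exact tendsto_finsetSum s fun l _ => (hξ l).inner (𝕜 := 𝕜) tendsto_const_nhds

theorem lp.tendsto_dual_apply_of_tendsto_apply [∀ l, CompleteSpace (G l)]
    (hbdd : ∃ C, ∀ k, ‖ξ k‖ ≤ C) (hξ : ∀ l, Tendsto (fun k => ξ k l) L (nhds (ξ₀ l)))
    (f : StrongDual 𝕜 (lp G 2)) : Tendsto (fun k => f (ξ k)) L (nhds (f ξ₀)) := by
  set r := (InnerProductSpace.toDual 𝕜 (lp G 2)).symm f
  have hf : ∀ x, f x = starRingEnd 𝕜 (inner 𝕜 x r) := fun x => by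
    rw [inner_conj_symm, InnerProductSpace.toDual_symm_apply]
  simp only [hf]
  exact (RCLike.continuous_conj.tendsto _).comp (lp.tendsto_inner_of_tendsto_apply hbdd hξ r)

end WeakConvergence

theorem statement10_general
    {X Y : Type*} [NormedAddCommGroup X] [InnerProductSpace ℝ X]
    [NormedAddCommGroup Y] [InnerProductSpace ℝ Y] [CompleteSpace Y]
    {Λ : Type*}
    (A : X →L[ℝ] Y) (v : Λ → Y) (κ : Λ → ℝ)
    (hκpos : ∀ l, 0 < κ l)
    (hv_mem : ∀ l, v l ∈ (LinearMap.range (A : X →ₗ[ℝ] Y)).topologicalClosure)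
    (hv_frame : ∃ a b : ℝ, 0 < a ∧ a ≤ b ∧
      ∀ y ∈ (LinearMap.range (A : X →ₗ[ℝ] Y)).topologicalClosure,
        Summable (fun l => ⟪y, v l⟫ ^ 2) ∧
        a * ‖y‖ ^ 2 ≤ ∑' l, ⟪y, v l⟫ ^ 2 ∧ ∑' l, ⟪y, v l⟫ ^ 2 ≤ b * ‖y‖ ^ 2)
    (T : lp (fun _ : Λ => ℝ) 2 →L[ℝ] X)
    (φ : ℝ → ℝ → ℝ → ℝ) (hfilter : IsRegFilter φ) (hB : AssumptionB φ)
    (α : ℝ) (hα : 0 < α)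
    (yδ : Y) (yk : ℕ → Y) (hyk : Tendsto (fun k => ‖yk k - yδ‖) atTop (nhds 0)) :
    ∃ (hc : Memℓp (fun l => φ α (κ l) ⟪yδ, v l⟫ / κ l) 2)
      (hck : ∀ k, Memℓp (fun l => φ α (κ l) ⟪yk k, v l⟫ / κ l) 2),
      ∀ w : X,
        Tendsto
          (fun k =>
            ⟪T (⟨fun l => φ α (κ l) ⟪yk k, v l⟫ / κ l, hck k⟩ : lp (fun _ : Λ => ℝ) 2), w⟫)
          atTop
          (nhds ⟪T (⟨fun l => φ α (κ l) ⟪yδ, v l⟫ / κ l, hc⟩ : lp (fun _ : Λ => ℝ) 2), w⟫) := by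
  obtain ⟨C₁, C₂, hC₁, hC₂, hφκ⟩ := hfilter.exists_abs_div_le hB hα
  obtain ⟨a, b, ha, hab, hframe⟩ := hv_frame
  have : CompleteSpace (LinearMap.range (A : X →ₗ[ℝ] Y)).topologicalClosure :=
    (Submodule.isClosed_topologicalClosure _).completeSpace_coe
  have hcoef (y : Y) : ∃ h : Memℓp (fun l => φ α (κ l) ⟪y, v l⟫ / κ l) 2,
      ‖(⟨_, h⟩ : lp (fun _ : Λ => ℝ) 2)‖ ≤ (C₁ + C₂ * (√b * ‖y‖)) * (√b * ‖y‖) := by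
    obtain ⟨hmem, hnorm⟩ := exists_memℓp_inner_norm_le_of_frame_upper_bound _ hv_mem
      (ha.le.trans hab) (fun y hy => ⟨(hframe y hy).1, (hframe y hy).2.2⟩) y
    obtain ⟨h, hle⟩ := lp.exists_norm_le_of_abs_le_quadratic ⟨_, hmem⟩ hC₁ hC₂
      fun l => hφκ (κ l) (hκpos l) _
    exact ⟨h, hle.trans (by gcongr)⟩
  choose hmem hnorm using hcoef
  refine ⟨hmem yδ, fun k => hmem (yk k), fun w => ?_⟩
  have hconv : Tendsto yk atTop (nhds yδ) := tendsto_iff_norm_sub_tendsto_zero.2 hyk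
  obtain ⟨R, hR⟩ := hconv.norm.bddAbove_range
  have hbdd : ∃ C, ∀ k, ‖(⟨_, hmem (yk k)⟩ : lp (fun _ : Λ => ℝ) 2)‖ ≤ C := by
    refine ⟨(C₁ + C₂ * (√b * R)) * (√b * R), fun k => (hnorm (yk k)).trans ?_⟩
    have hR0 : 0 ≤ R := (norm_nonneg _).trans (hR ⟨0, rfl⟩)
    have hRk : ‖yk k‖ ≤ R := hR ⟨k, rfl⟩
    gcongr
  have hcoord (l : Λ) : Tendsto (fun k => φ α (κ l) ⟪yk k, v l⟫ / κ l) atTop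
      (nhds (φ α (κ l) ⟪yδ, v l⟫ / κ l)) :=
    (((hfilter.continuous hα (hκpos l)).tendsto _).comp
      (hconv.inner tendsto_const_nhds)).div_const _
  simpa only [ContinuousLinearMap.comp_apply, innerSL_apply_apply, real_inner_comm _ w] using
    lp.tendsto_dual_apply_of_tendsto_apply (ξ₀ := ⟨_, hmem yδ⟩) hbdd hcoord ((innerSL ℝ w).comp T)

/-- **Stability of the non-linear filtered DFD.** Given a diagonal frame
decomposition `(u, v, κ)` of a bounded operator `A : X → Y`, a dual frame `ū` of `u` with
bounded synthesis operator `T`, and a non-linear regularizing filter satisfying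
Assumption B: for fixed `α > 0` and `y^k → y^δ` in `Y`, the reconstructions
`B_α(y^k) = ∑_λ κ_λ⁻¹ φ_α(κ_λ, ⟨y^k, v_λ⟩) ū_λ` are well defined and converge weakly to
`B_α(y^δ)`. -/
theorem statement10
    {X Y : Type*} [NormedAddCommGroup X] [InnerProductSpace ℝ X] [CompleteSpace X]
    [NormedAddCommGroup Y] [InnerProductSpace ℝ Y] [CompleteSpace Y]
    {Λ : Type*} [Countable Λ]
    (A : X →L[ℝ] Y) (u ubar : Λ → X) (v : Λ → Y) (κ : Λ → ℝ)
    (hκpos : ∀ l, 0 < κ l) (hκbd : BddAbove (Set.range κ))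
    (hu_mem : ∀ l, u l ∈ (LinearMap.ker (A : X →ₗ[ℝ] Y))ᗮ)
    (hu_frame : ∃ a b : ℝ, 0 < a ∧ a ≤ b ∧ ∀ x ∈ (LinearMap.ker (A : X →ₗ[ℝ] Y))ᗮ,
      Summable (fun l => ⟪x, u l⟫ ^ 2) ∧
      a * ‖x‖ ^ 2 ≤ ∑' l, ⟪x, u l⟫ ^ 2 ∧ ∑' l, ⟪x, u l⟫ ^ 2 ≤ b * ‖x‖ ^ 2)
    (hv_mem : ∀ l, v l ∈ (LinearMap.range (A : X →ₗ[ℝ] Y)).topologicalClosure)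
    (hv_frame : ∃ a b : ℝ, 0 < a ∧ a ≤ b ∧
      ∀ y ∈ (LinearMap.range (A : X →ₗ[ℝ] Y)).topologicalClosure,
        Summable (fun l => ⟪y, v l⟫ ^ 2) ∧
        a * ‖y‖ ^ 2 ≤ ∑' l, ⟪y, v l⟫ ^ 2 ∧ ∑' l, ⟪y, v l⟫ ^ 2 ≤ b * ‖y‖ ^ 2)
    (hquasi : ∀ l, ContinuousLinearMap.adjoint A (v l) = κ l • u l)
    (T : lp (fun _ : Λ => ℝ) 2 →L[ℝ] X)
    (hT : ∀ c : lp (fun _ : Λ => ℝ) 2, HasSum (fun l => c l • ubar l) (T c))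
    (hdual : ∀ x ∈ (LinearMap.ker (A : X →ₗ[ℝ] Y))ᗮ, HasSum (fun l => ⟪x, u l⟫ • ubar l) x)
    (φ : ℝ → ℝ → ℝ → ℝ) (hfilter : IsRegFilter φ) (hB : AssumptionB φ)
    (α : ℝ) (hα : 0 < α)
    (yδ : Y) (yk : ℕ → Y) (hyk : Tendsto (fun k => ‖yk k - yδ‖) atTop (nhds 0)) :
    ∃ (hc : Memℓp (fun l => φ α (κ l) ⟪yδ, v l⟫ / κ l) 2)
      (hck : ∀ k, Memℓp (fun l => φ α (κ l) ⟪yk k, v l⟫ / κ l) 2),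
      ∀ w : X,
        Tendsto
          (fun k =>
            ⟪T (⟨fun l => φ α (κ l) ⟪yk k, v l⟫ / κ l, hck k⟩ : lp (fun _ : Λ => ℝ) 2), w⟫)
          atTop
          (nhds ⟪T (⟨fun l => φ α (κ l) ⟪yδ, v l⟫ / κ l, hc⟩ : lp (fun _ : Λ => ℝ) 2), w⟫) :=
  statement10_general A v κ hκpos hv_mem hv_frame T φ hfilter hB α hα yδ yk hyk
end
end

section
/- Let X, Y be real Hilbert spaces, A : X → Y a bounded linear operator with a diagonal frame decomposition (u_λ, v_λ, κ_λ)_{λ∈Λ}, sup_λ κ_λ < ∞, and let (ū_λ)_λ be a dual frame of (u_λ)_λ whose synthesis operator T_ū : ℓ²(Λ) → X is bounded. Let (φ_α)_{α>0} be a non-linear regularizing filter satisfying Assumption B and define B_α(y) := ∑_λ κ_λ⁻¹ φ_α(κ_λ, ⟨y, v_λ⟩) ū_λ. Let (δ_k)_k and (α_k)_k be positive null sequences with δ_k²/α_k → 0, let y ∈ ran A, and suppose there exist α̃ > 0 and w ∈ ℓ²(Λ) with φ_{α̃}(κ_λ, w_λ) = ⟨y, v_λ⟩ for all λ. Let (y^k)_k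 in Y satisfy ‖y^k − y‖ ≤ δ_k. Then B_{α_k}(y^k) converges weakly in X, as k → ∞, to the unique x⁺ ∈ (ker A)^⊥ with A x⁺ = y. -/
open scoped ENNReal RealInnerProductSpace
open Filter

noncomputable section

/-!
The reconstructions in fact converge in norm. Write `c_λ = ⟨x⁺, u_λ⟩` and
`n_λ = ⟨y^k - y, v_λ⟩`; then `⟨y^k, v_λ⟩ = κ_λ c_λ + n_λ` and `x⁺ = T c`, so it suffices that the
filtered coefficients `φ_α(κ_λ, κ_λ c_λ + n_λ) / κ_λ` converge to `c` in `ℓ²`. The error splits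
into the approximation error `φ_α(κ c) / κ - c`, which tends to zero by dominated convergence, and
the propagated noise. On the components with `κ_λ² > μ α` nonexpansiveness bounds the propagated
noise by `‖n‖² / (μ α) ≲ δ² / α`. On the components with `κ_λ² ≤ μ α` both arguments of `φ_α` lie
in the window `|x| ≤ d α / κ` of (B2) once `μ ‖c‖_∞ ≤ d / 2` and `δ² / α` is small, and there
(B2) bounds the error by `e² (μ c_λ² + n_λ² / α)`; the mass of `c` on `{κ_λ² ≤ μ α}` vanishes as
`α → 0`.
-/
open Topology

def AssumptionB2 (φ : ℝ → ℝ → ℝ → ℝ) (d e : ℝ) : Prop :=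
  ∀ κ > (0 : ℝ), ∀ α > (0 : ℝ), ∀ x : ℝ,
    |x| ≤ d * α / κ → |φ α κ x| ≤ e * κ / Real.sqrt α * |x|

section SquareSummable

variable {Λ : Type*} {f : Λ → ℝ}

theorem memℓp_two_of_summable_sq (hf : Summable fun l => f l ^ 2) : Memℓp f 2 :=
  memℓp_gen (by simpa [Real.rpow_natCast, sq_abs] using hf)

theorem abs_le_one_add_tsum_sq (hf : Summable fun l => f l ^ 2) (l : Λ) :
    |f l| ≤ 1 + ∑' l, f l ^ 2 := by
  have := hf.le_tsum l fun _ _ => sq_nonneg _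
  nlinarith [sq_abs (f l), sq_nonneg (|f l| - 1)]

theorem lp.norm_sq_eq_tsum_sq (g : lp (fun _ : Λ => ℝ) 2) : ‖g‖ ^ 2 = ∑' l, g l ^ 2 := by
  simpa [Real.rpow_natCast, sq_abs] using lp.norm_rpow_eq_tsum (p := 2) (by norm_num) g

theorem lp.tendsto_of_tendsto_tsum_sq_sub {ι : Type*} {L : Filter ι}
    {F : ι → lp (fun _ : Λ => ℝ) 2} {G : lp (fun _ : Λ => ℝ) 2}
    (h : Tendsto (fun k => ∑' l, (F k l - G l) ^ 2) L (𝓝 0)) : Tendsto F L (𝓝 G) := by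
  rw [tendsto_iff_norm_sub_tendsto_zero]
  have hnorm : ∀ k, ‖F k - G‖ = Real.sqrt (∑' l, (F k l - G l) ^ 2) := fun k => by
    rw [← Real.sqrt_sq (norm_nonneg (F k - G)), lp.norm_sq_eq_tsum_sq]
    rfl
  simp only [hnorm]
  exact (Real.continuous_sqrt.tendsto' 0 0 Real.sqrt_zero).comp h

end SquareSummable

namespace IsRegFilter

variable {φ : ℝ → ℝ → ℝ → ℝ} {α κ : ℝ}

theorem abs_sub_le (hφ : IsRegFilter φ) (hα : 0 < α) (hκ : 0 < κ) (x y : ℝ) :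
    |φ α κ x - φ α κ y| ≤ |x - y| :=
  hφ.2.1 α hα κ hκ x y

theorem abs_le_s11 (hφ : IsRegFilter φ) (hα : 0 < α) (hκ : 0 < κ) (x : ℝ) : |φ α κ x| ≤ |x| := by
  simpa [hφ.2.2.1 α hα κ hκ] using hφ.abs_sub_le hα hκ x 0

theorem sq_div_sub_le (hφ : IsRegFilter φ) (hα : 0 < α) (hκ : 0 < κ) (c : ℝ) :
    (φ α κ (κ * c) / κ - c) ^ 2 ≤ 4 * c ^ 2 := by
  have h : |φ α κ (κ * c) / κ| ≤ |c| := by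
    rw [abs_div, abs_of_pos hκ, div_le_iff₀ hκ]
    simpa [abs_mul, abs_of_pos hκ, mul_comm] using hφ.abs_le_s11 hα hκ (κ * c)
  have h2 : |φ α κ (κ * c) / κ - c| ≤ |2 * c| := by
    rw [abs_mul, abs_two]
    linarith [abs_sub (φ α κ (κ * c) / κ) c]
  nlinarith [sq_le_sq.2 h2]

theorem tendsto_div_sub (hφ : IsRegFilter φ) (hκ : 0 < κ) (c : ℝ) {ι : Type*} {L : Filter ι}
    {α : ι → ℝ} (hα : ∀ k, 0 < α k) (hα0 : Tendsto α L (𝓝 0)) :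
    Tendsto (fun k => φ (α k) κ (κ * c) / κ - c) L (𝓝 0) := by
  have h := (hφ.2.2.2 κ hκ (κ * c)).comp
    (tendsto_nhdsWithin_of_tendsto_nhds_of_eventually_within α hα0 (.of_forall hα))
  simpa [hκ.ne'] using (h.div_const κ).sub_const c

theorem sq_sub_div_le_of_lt (hφ : IsRegFilter φ) (hα : 0 < α) (hκ : 0 < κ) {μ : ℝ}
    (hμ : 0 < μ) (h : μ * α < κ ^ 2) (x n : ℝ) :
    ((φ α κ (x + n) - φ α κ x) / κ) ^ 2 ≤ n ^ 2 / (μ * α) := by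
  have h1 : (φ α κ (x + n) - φ α κ x) ^ 2 ≤ n ^ 2 :=
    sq_le_sq.2 (by simpa using hφ.abs_sub_le hα hκ (x + n) x)
  rw [div_pow]
  calc _ ≤ n ^ 2 / κ ^ 2 := by gcongr
    _ ≤ n ^ 2 / (μ * α) := by gcongr

end IsRegFilter

namespace AssumptionB2

variable {φ : ℝ → ℝ → ℝ → ℝ} {d e α κ : ℝ}

theorem abs_div_le (hB2 : AssumptionB2 φ d e) (hα : 0 < α) (hκ : 0 < κ) {x : ℝ}
    (hx : |x| ≤ d * α / κ) : |φ α κ x / κ| ≤ e / Real.sqrt α * |x| := by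
  rw [abs_div, abs_of_pos hκ, div_le_iff₀ hκ]
  calc |φ α κ x| ≤ e * κ / Real.sqrt α * |x| := hB2 κ hκ α hα x hx
    _ = e / Real.sqrt α * |x| * κ := by ring

theorem abs_div_le_of_abs_le (hB2 : AssumptionB2 φ d e) (hφ : IsRegFilter φ) (hd : 0 < d)
    (he : 0 ≤ e) (hα : 0 < α) (hκ : 0 < κ) {x M : ℝ} (hxM : |x| ≤ M) :
    |φ α κ x / κ| ≤ (e / Real.sqrt α + M / (d * α)) * |x| := by
  have hM : 0 ≤ M / (d * α) := div_nonneg ((abs_nonneg x).trans hxM) (by positivity)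
  rcases le_or_gt |x| (d * α / κ) with hx | hx
  · calc _ ≤ e / Real.sqrt α * |x| := hB2.abs_div_le hα hκ hx
      _ ≤ _ := by gcongr; exact le_add_of_nonneg_right hM
  · have hκinv : 1 / κ ≤ |x| / (d * α) := by
      rw [div_lt_iff₀ hκ] at hx
      rw [div_le_div_iff₀ hκ (by positivity)]
      linarith
    calc |φ α κ x / κ| = |φ α κ x| * (1 / κ) := by rw [abs_div, abs_of_pos hκ]; ring
      _ ≤ |x| * (|x| / (d * α)) :=
        mul_le_mul (hφ.abs_le_s11 hα hκ x) hκinv (by positivity) (abs_nonneg x)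
      _ ≤ |x| * (M / (d * α)) := by gcongr
      _ ≤ _ := by
        rw [mul_comm]
        gcongr
        exact le_add_of_nonneg_left (by positivity)

theorem memℓp_two_div {Λ : Type*} (hB2 : AssumptionB2 φ d e) (hφ : IsRegFilter φ) (hd : 0 < d)
    (he : 0 ≤ e) (hα : 0 < α) {κ : Λ → ℝ} (hκ : ∀ l, 0 < κ l) {b : Λ → ℝ}
    (hb : Summable fun l => b l ^ 2) : Memℓp (fun l => φ α (κ l) (b l) / κ l) 2 :=
  ((memℓp_two_of_summable_sq hb).norm.const_mul _).mono fun l =>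
    hB2.abs_div_le_of_abs_le hφ hd he hα (hκ l) (abs_le_one_add_tsum_sq hb l)

theorem sq_sub_div_le_of_le (hB2 : AssumptionB2 φ d e) (he : 0 ≤ e) (hα : 0 < α) (hκ : 0 < κ)
    {μ : ℝ} (hμ : 0 < μ) (h : κ ^ 2 ≤ μ * α) {c n : ℝ} (hc : μ * |c| ≤ d / 2)
    (hn : 4 * μ * n ^ 2 ≤ d ^ 2 * α) :
    ((φ α κ (κ * c + n) - φ α κ (κ * c)) / κ) ^ 2 ≤
      8 * e ^ 2 * μ * c ^ 2 + 2 * e ^ 2 * n ^ 2 / α := by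
  have hd : 0 ≤ d := by linarith [mul_nonneg hμ.le (abs_nonneg c)]
  have hκc : κ * |κ * c| ≤ d * α / 2 := by
    rw [abs_mul, abs_of_pos hκ, ← mul_assoc, ← sq]
    nlinarith [mul_le_mul_of_nonneg_right h (abs_nonneg c)]
  have hκn : κ * |n| ≤ d * α / 2 := by
    refine (pow_le_pow_iff_left₀ (by positivity) (by positivity) two_ne_zero).1 ?_
    rw [mul_pow, sq_abs]
    nlinarith [mul_le_mul_of_nonneg_right h (sq_nonneg n)]
  have hx : |κ * c| ≤ d * α / κ := by
    rw [le_div_iff₀ hκ]; nlinarith [abs_nonneg (κ * c)]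
  have hxn : |κ * c + n| ≤ d * α / κ := by
    rw [le_div_iff₀ hκ]; nlinarith [abs_add_le (κ * c) n]
  have hN : |(φ α κ (κ * c + n) - φ α κ (κ * c)) / κ| ≤ e / Real.sqrt α * (2 * |κ * c| + |n|) := by
    rw [sub_div]
    calc _ ≤ |φ α κ (κ * c + n) / κ| + |φ α κ (κ * c) / κ| := abs_sub _ _
      _ ≤ e / Real.sqrt α * |κ * c + n| + e / Real.sqrt α * |κ * c| :=
        add_le_add (hB2.abs_div_le hα hκ hxn) (hB2.abs_div_le hα hκ hx)
      _ ≤ e / Real.sqrt α * (|κ * c| + |n|) + e / Real.sqrt α * |κ * c| := by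
        gcongr; exact abs_add_le _ _
      _ = _ := by ring
  calc _ = |(φ α κ (κ * c + n) - φ α κ (κ * c)) / κ| ^ 2 := (sq_abs _).symm
    _ ≤ (e / Real.sqrt α * (2 * |κ * c| + |n|)) ^ 2 := pow_le_pow_left₀ (abs_nonneg _) hN 2
    _ = e ^ 2 / α * (2 * |κ * c| + |n|) ^ 2 := by rw [mul_pow, div_pow, Real.sq_sqrt hα.le]
    _ ≤ e ^ 2 / α * (8 * κ ^ 2 * c ^ 2 + 2 * n ^ 2) := by
      gcongr
      nlinarith [sq_nonneg (2 * |κ * c| - |n|), sq_abs (κ * c), sq_abs n, mul_pow κ c 2]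
    _ ≤ e ^ 2 / α * (8 * (μ * α) * c ^ 2 + 2 * n ^ 2) := by gcongr
    _ = _ := by field_simp

theorem sq_sub_div_le (hB2 : AssumptionB2 φ d e) (hφ : IsRegFilter φ) (he : 0 ≤ e)
    (hα : 0 < α) (hκ : 0 < κ) {μ : ℝ} (hμ : 0 < μ) {c n : ℝ} (hc : μ * |c| ≤ d / 2)
    (hn : 4 * μ * n ^ 2 ≤ d ^ 2 * α) :
    ((φ α κ (κ * c + n) - φ α κ (κ * c)) / κ) ^ 2 ≤
      8 * e ^ 2 * μ * (if κ ^ 2 ≤ μ * α then c ^ 2 else 0) + (2 * e ^ 2 + 1 / μ) / α * n ^ 2 := by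
  have hsplit : (2 * e ^ 2 + 1 / μ) / α * n ^ 2 = 2 * e ^ 2 * n ^ 2 / α + n ^ 2 / (μ * α) := by
    field_simp
  have h1 : 0 ≤ 2 * e ^ 2 * n ^ 2 / α := by positivity
  have h2 : 0 ≤ n ^ 2 / (μ * α) := by positivity
  split_ifs with h
  · linarith [hB2.sq_sub_div_le_of_le he hα hκ hμ h hc hn]
  · linarith [hφ.sq_sub_div_le_of_lt hα hκ hμ (not_le.1 h) (κ * c) n]

end AssumptionB2

theorem AssumptionB2.tsum_sq_div_sub_le {Λ : Type*} {φ : ℝ → ℝ → ℝ → ℝ} {d e α μ ε : ℝ}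
    (hB2 : AssumptionB2 φ d e) (hφ : IsRegFilter φ) (he : 0 ≤ e) (hα : 0 < α) {κ c n : Λ → ℝ}
    (hκ : ∀ l, 0 < κ l) (hc : Summable fun l => c l ^ 2) (hn : Summable fun l => n l ^ 2)
    (hnε : ∑' l, n l ^ 2 ≤ ε) (hμ : 0 < μ) (hμc : ∀ l, μ * |c l| ≤ d / 2)
    (hnα : ∀ l, 4 * μ * n l ^ 2 ≤ d ^ 2 * α) :
    ∑' l, (φ α (κ l) (κ l * c l + n l) / κ l - c l) ^ 2 ≤
      2 * (∑' l, (φ α (κ l) (κ l * c l) / κ l - c l) ^ 2 +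
        (8 * e ^ 2 * μ * ∑' l, (if κ l ^ 2 ≤ μ * α then c l ^ 2 else 0) +
          (2 * e ^ 2 + 1 / μ) * (ε / α))) := by
  set K := 2 * e ^ 2 + 1 / μ
  set E := fun l => (φ α (κ l) (κ l * c l) / κ l - c l) ^ 2
  set I := fun l => if κ l ^ 2 ≤ μ * α then c l ^ 2 else 0
  have hE : Summable E := (hc.mul_left 4).of_nonneg_of_le (fun l => sq_nonneg _)
    fun l => hφ.sq_div_sub_le hα (hκ l) (c l)
  have hI : Summable I := hc.of_nonneg_of_le (fun l => by dsimp [I]; split_ifs <;> positivity)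
    fun l => by dsimp [I]; split_ifs <;> simp [sq_nonneg]
  have hbound : ∀ l, (φ α (κ l) (κ l * c l + n l) / κ l - c l) ^ 2 ≤
      2 * (E l + (8 * e ^ 2 * μ * I l + K / α * n l ^ 2)) := fun l => by
    have hN := hB2.sq_sub_div_le hφ he hα (hκ l) hμ (hμc l) (hnα l)
    have hsplit : φ α (κ l) (κ l * c l + n l) / κ l - c l =
        (φ α (κ l) (κ l * c l + n l) - φ α (κ l) (κ l * c l)) / κ l +
          (φ α (κ l) (κ l * c l) / κ l - c l) := by ring
    rw [hsplit]
    refine add_sq_le.trans ?_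
    simp only [E, I, K]
    linarith
  have hR := (hE.add ((hI.mul_left (8 * e ^ 2 * μ)).add (hn.mul_left (K / α)))).mul_left 2
  calc _ ≤ ∑' l, 2 * (E l + (8 * e ^ 2 * μ * I l + K / α * n l ^ 2)) :=
        Summable.tsum_le_tsum hbound (hR.of_nonneg_of_le (fun _ => sq_nonneg _) hbound) hR
    _ = 2 * (∑' l, E l + (8 * e ^ 2 * μ * ∑' l, I l + K / α * ∑' l, n l ^ 2)) := by
        rw [tsum_mul_left, hE.tsum_add ((hI.mul_left _).add (hn.mul_left _)),
          (hI.mul_left _).tsum_add (hn.mul_left _), tsum_mul_left, tsum_mul_left]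
    _ ≤ 2 * (∑' l, E l + (8 * e ^ 2 * μ * ∑' l, I l + K / α * ε)) := by
        have : 0 ≤ K / α := div_nonneg (by positivity) hα.le
        gcongr
    _ = 2 * (∑' l, E l + (8 * e ^ 2 * μ * ∑' l, I l + K * (ε / α))) := by ring

section Coefficients

variable {Λ ι : Type*} {L : Filter ι} {κ : Λ → ℝ} {c : Λ → ℝ} {α : ι → ℝ}

theorem tendsto_tsum_ite_sq (hκ : ∀ l, 0 < κ l) (hc : Summable fun l => c l ^ 2)
    (hα0 : Tendsto α L (𝓝 0)) (μ : ℝ) :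
    Tendsto (fun k => ∑' l, if κ l ^ 2 ≤ μ * α k then c l ^ 2 else 0) L (𝓝 0) := by
  have h : Tendsto (fun k => ∑' l, if κ l ^ 2 ≤ μ * α k then c l ^ 2 else 0) L
      (𝓝 (∑' _ : Λ, 0)) :=
    tendsto_tsum_of_dominated_convergence hc (fun l => ?_) (.of_forall fun k l => ?_)
  · simpa using h
  · have hμα : Tendsto (fun k => μ * α k) L (𝓝 0) := by simpa using hα0.const_mul μ
    refine tendsto_const_nhds.congr' ?_
    filter_upwards [hμα.eventually_lt_const (pow_pos (hκ l) 2)] with k hk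
    exact (if_neg (not_le.2 hk)).symm
  · split_ifs <;> simp [sq_nonneg]

theorem IsRegFilter.tendsto_tsum_sq_div_sub {φ : ℝ → ℝ → ℝ → ℝ} (hφ : IsRegFilter φ)
    (hκ : ∀ l, 0 < κ l) (hc : Summable fun l => c l ^ 2) (hα : ∀ k, 0 < α k)
    (hα0 : Tendsto α L (𝓝 0)) :
    Tendsto (fun k => ∑' l, (φ (α k) (κ l) (κ l * c l) / κ l - c l) ^ 2) L (𝓝 0) := by
  have h : Tendsto (fun k => ∑' l, (φ (α k) (κ l) (κ l * c l) / κ l - c l) ^ 2) L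
      (𝓝 (∑' _ : Λ, 0)) :=
    tendsto_tsum_of_dominated_convergence (hc.mul_left 4)
      (fun l => by simpa using (hφ.tendsto_div_sub (hκ l) (c l) hα hα0).pow 2)
      (.of_forall fun k l => ?_)
  · simpa using h
  · simpa using hφ.sq_div_sub_le (hα k) (hκ l) (c l)

theorem tendsto_tsum_sq_filter_div_sub {φ : ℝ → ℝ → ℝ → ℝ} {d e : ℝ} (hφ : IsRegFilter φ)
    (hB2 : AssumptionB2 φ d e) (hd : 0 < d) (he : 0 ≤ e) (hκ : ∀ l, 0 < κ l)
    (hc : Summable fun l => c l ^ 2) (hα : ∀ k, 0 < α k) (hα0 : Tendsto α L (𝓝 0))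
    {n : ι → Λ → ℝ} (hn : ∀ k, Summable fun l => n k l ^ 2) {ε : ι → ℝ}
    (hnε : ∀ k, ∑' l, n k l ^ 2 ≤ ε k) (hε : Tendsto (fun k => ε k / α k) L (𝓝 0)) :
    Tendsto (fun k => ∑' l, (φ (α k) (κ l) (κ l * c l + n k l) / κ l - c l) ^ 2) L (𝓝 0) := by
  obtain ⟨μ, hμ, hμc⟩ : ∃ μ > 0, ∀ l, μ * |c l| ≤ d / 2 := by
    refine ⟨d / (2 * (1 + ∑' l, c l ^ 2)), by positivity, fun l => ?_⟩
    calc _ ≤ d / (2 * (1 + ∑' l, c l ^ 2)) * (1 + ∑' l, c l ^ 2) := by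
          gcongr; exact abs_le_one_add_tsum_sq hc l
      _ = d / 2 := by field_simp [(by positivity : 0 < 1 + ∑' l, c l ^ 2).ne']
  have hsmall : ∀ᶠ k in L, ∀ l, 4 * μ * n k l ^ 2 ≤ d ^ 2 * α k := by
    filter_upwards [hε.eventually (ge_mem_nhds (show 0 < d ^ 2 / (4 * μ) by positivity))]
      with k hk l
    rw [div_le_iff₀ (hα k)] at hk
    calc 4 * μ * n k l ^ 2 ≤ 4 * μ * ε k := by
          gcongr; exact ((hn k).le_tsum l fun _ _ => sq_nonneg _).trans (hnε k)
      _ ≤ 4 * μ * (d ^ 2 / (4 * μ) * α k) := by gcongr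
      _ = d ^ 2 * α k := by field_simp
  have hlim := ((hφ.tendsto_tsum_sq_div_sub hκ hc hα hα0).add
    (((tendsto_tsum_ite_sq hκ hc hα0 μ).const_mul (8 * e ^ 2 * μ)).add
      (hε.const_mul (2 * e ^ 2 + 1 / μ)))).const_mul 2
  refine squeeze_zero' (.of_forall fun k => tsum_nonneg fun l => sq_nonneg _) ?_
    (by simpa using hlim)
  filter_upwards [hsmall] with k hk
  simpa only [one_div] using hB2.tsum_sq_div_sub_le hφ he (hα k) hκ hc (hn k) (hnε k) hμ hμc hk

end Coefficients

theorem summable_inner_sq_and_tsum_le_of_upper_frame_bound {E ι : Type*} [NormedAddCommGroup E]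
    [InnerProductSpace ℝ E] {K : Submodule ℝ E} [K.HasOrthogonalProjection] {v : ι → E}
    (hv : ∀ i, v i ∈ K) {b : ℝ} (hb : 0 ≤ b)
    (hK : ∀ z ∈ K, Summable (fun i => ⟪z, v i⟫ ^ 2) ∧ ∑' i, ⟪z, v i⟫ ^ 2 ≤ b * ‖z‖ ^ 2) (z : E) :
    Summable (fun i => ⟪z, v i⟫ ^ 2) ∧ ∑' i, ⟪z, v i⟫ ^ 2 ≤ b * ‖z‖ ^ 2 := by
  have hP : ∀ i, ⟪K.starProjection z, v i⟫ = ⟪z, v i⟫ := fun i => by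
    rw [K.inner_starProjection_left_eq_right, K.starProjection_eq_self_iff.mpr (hv i)]
  obtain ⟨hs, hle⟩ := hK _ (K.starProjection_apply_mem z)
  simp only [hP] at hs hle
  refine ⟨hs, hle.trans ?_⟩
  gcongr
  exact K.norm_starProjection_apply_le z

theorem statement11_general
    {X Y : Type*} [NormedAddCommGroup X] [InnerProductSpace ℝ X] [CompleteSpace X]
    [NormedAddCommGroup Y] [InnerProductSpace ℝ Y] [CompleteSpace Y]
    {Λ : Type*}
    (A : X →L[ℝ] Y) (u ubar : Λ → X) (v : Λ → Y) (κ : Λ → ℝ)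
    (hκpos : ∀ l, 0 < κ l)
    (hu_frame : ∃ a b : ℝ, 0 < a ∧ a ≤ b ∧ ∀ x ∈ (LinearMap.ker (A : X →ₗ[ℝ] Y))ᗮ,
      Summable (fun l => ⟪x, u l⟫ ^ 2) ∧
      a * ‖x‖ ^ 2 ≤ ∑' l, ⟪x, u l⟫ ^ 2 ∧ ∑' l, ⟪x, u l⟫ ^ 2 ≤ b * ‖x‖ ^ 2)
    (hv_mem : ∀ l, v l ∈ (LinearMap.range (A : X →ₗ[ℝ] Y)).topologicalClosure)
    (hv_frame : ∃ a b : ℝ, 0 < a ∧ a ≤ b ∧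
      ∀ y ∈ (LinearMap.range (A : X →ₗ[ℝ] Y)).topologicalClosure,
        Summable (fun l => ⟪y, v l⟫ ^ 2) ∧
        a * ‖y‖ ^ 2 ≤ ∑' l, ⟪y, v l⟫ ^ 2 ∧ ∑' l, ⟪y, v l⟫ ^ 2 ≤ b * ‖y‖ ^ 2)
    (hquasi : ∀ l, ContinuousLinearMap.adjoint A (v l) = κ l • u l)
    (T : lp (fun _ : Λ => ℝ) 2 →L[ℝ] X)
    (hT : ∀ c : lp (fun _ : Λ => ℝ) 2, HasSum (fun l => c l • ubar l) (T c))
    (hdual : ∀ x ∈ (LinearMap.ker (A : X →ₗ[ℝ] Y))ᗮ, HasSum (fun l => ⟪x, u l⟫ • ubar l) x)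
    (φ : ℝ → ℝ → ℝ → ℝ) (hfilter : IsRegFilter φ) (hB : AssumptionB φ)
    (δ αs : ℕ → ℝ) (hαpos : ∀ k, 0 < αs k)
    (hα0 : Tendsto αs atTop (nhds 0))
    (hrate : Tendsto (fun k => δ k ^ 2 / αs k) atTop (nhds 0))
    (y : Y)
    (yk : ℕ → Y) (hyk : ∀ k, ‖yk k - y‖ ≤ δ k) :
    ∃ hck : ∀ k, Memℓp (fun l => φ (αs k) (κ l) ⟪yk k, v l⟫ / κ l) 2,
      ∀ xp : X, xp ∈ (LinearMap.ker (A : X →ₗ[ℝ] Y))ᗮ → A xp = y →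
        ∀ w : X,
          Tendsto
            (fun k =>
              ⟪T (⟨fun l => φ (αs k) (κ l) ⟪yk k, v l⟫ / κ l, hck k⟩ :
                lp (fun _ : Λ => ℝ) 2), w⟫)
            atTop (nhds ⟪xp, w⟫) := by
  obtain ⟨_, _, -, -, hu⟩ := hu_frame
  obtain ⟨av, bv, hav, havb, hv⟩ := hv_frame
  obtain ⟨d, hd, e, he, hB2⟩ : ∃ d > 0, ∃ e > 0, AssumptionB2 φ d e := hB.2
  have hbv : 0 ≤ bv := hav.le.trans havb
  have hbessel := summable_inner_sq_and_tsum_le_of_upper_frame_bound hv_mem hbv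
    fun z hz => ⟨(hv z hz).1, (hv z hz).2.2⟩
  have hck : ∀ k, Memℓp (fun l => φ (αs k) (κ l) ⟪yk k, v l⟫ / κ l) 2 := fun k =>
    hB2.memℓp_two_div hfilter hd he.le (hαpos k) hκpos (hbessel (yk k)).1
  refine ⟨hck, fun xp hxp hAxp w => ?_⟩
  set C : lp (fun _ : Λ => ℝ) 2 := ⟨fun l => ⟪xp, u l⟫, memℓp_two_of_summable_sq (hu xp hxp).1⟩
  have hTC : T C = xp := (hT C).unique (hdual xp hxp)
  have hcoeff : ∀ k l, κ l * ⟪xp, u l⟫ + ⟪yk k - y, v l⟫ = ⟪yk k, v l⟫ := fun k l => by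
    rw [inner_sub_left, ← hAxp, ← ContinuousLinearMap.adjoint_inner_right, hquasi,
      real_inner_smul_right]
    ring
  have hnoise : ∀ k, ∑' l, ⟪yk k - y, v l⟫ ^ 2 ≤ bv * δ k ^ 2 := fun k =>
    (hbessel _).2.trans (mul_le_mul_of_nonneg_left (pow_le_pow_left₀ (norm_nonneg _) (hyk k) 2) hbv)
  have hconv := tendsto_tsum_sq_filter_div_sub hfilter hB2 hd he.le hκpos (hu xp hxp).1 hαpos
    hα0 (fun k => (hbessel _).1) hnoise (by simpa [mul_div_assoc] using hrate.const_mul bv)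
  simp only [hcoeff] at hconv
  have hTconv := (T.continuous.tendsto C).comp
    (lp.tendsto_of_tendsto_tsum_sq_sub (F := fun k => ⟨_, hck k⟩) (G := C) hconv)
  rw [hTC] at hTconv
  exact hTconv.inner tendsto_const_nhds

/-- **Weak convergence of the non-linear filtered DFD.** Given a diagonal
frame decomposition `(u, v, κ)` of `A : X → Y`, a dual frame `ū` of `u` with bounded
synthesis operator `T`, a non-linear regularizing filter satisfying Assumption B, exact data
`y ∈ ran A` whose coefficients lie in the range of `Φ_{α̃,κ}`, noisy data `‖y^k − y‖ ≤ δ_k`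
with `δ_k, α_k → 0` and `δ_k²/α_k → 0`: the reconstructions `B_{α_k}(y^k)` converge weakly
to the unique `x⁺ ∈ (ker A)^⊥` with `A x⁺ = y`. -/
theorem statement11
    {X Y : Type*} [NormedAddCommGroup X] [InnerProductSpace ℝ X] [CompleteSpace X]
    [NormedAddCommGroup Y] [InnerProductSpace ℝ Y] [CompleteSpace Y]
    {Λ : Type*} [Countable Λ]
    (A : X →L[ℝ] Y) (u ubar : Λ → X) (v : Λ → Y) (κ : Λ → ℝ)
    (hκpos : ∀ l, 0 < κ l) (hκbd : BddAbove (Set.range κ))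
    (hu_mem : ∀ l, u l ∈ (LinearMap.ker (A : X →ₗ[ℝ] Y))ᗮ)
    (hu_frame : ∃ a b : ℝ, 0 < a ∧ a ≤ b ∧ ∀ x ∈ (LinearMap.ker (A : X →ₗ[ℝ] Y))ᗮ,
      Summable (fun l => ⟪x, u l⟫ ^ 2) ∧
      a * ‖x‖ ^ 2 ≤ ∑' l, ⟪x, u l⟫ ^ 2 ∧ ∑' l, ⟪x, u l⟫ ^ 2 ≤ b * ‖x‖ ^ 2)
    (hv_mem : ∀ l, v l ∈ (LinearMap.range (A : X →ₗ[ℝ] Y)).topologicalClosure)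
    (hv_frame : ∃ a b : ℝ, 0 < a ∧ a ≤ b ∧
      ∀ y ∈ (LinearMap.range (A : X →ₗ[ℝ] Y)).topologicalClosure,
        Summable (fun l => ⟪y, v l⟫ ^ 2) ∧
        a * ‖y‖ ^ 2 ≤ ∑' l, ⟪y, v l⟫ ^ 2 ∧ ∑' l, ⟪y, v l⟫ ^ 2 ≤ b * ‖y‖ ^ 2)
    (hquasi : ∀ l, ContinuousLinearMap.adjoint A (v l) = κ l • u l)
    (T : lp (fun _ : Λ => ℝ) 2 →L[ℝ] X)
    (hT : ∀ c : lp (fun _ : Λ => ℝ) 2, HasSum (fun l => c l • ubar l) (T c))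
    (hdual : ∀ x ∈ (LinearMap.ker (A : X →ₗ[ℝ] Y))ᗮ, HasSum (fun l => ⟪x, u l⟫ • ubar l) x)
    (φ : ℝ → ℝ → ℝ → ℝ) (hfilter : IsRegFilter φ) (hB : AssumptionB φ)
    (δ αs : ℕ → ℝ) (hδpos : ∀ k, 0 < δ k) (hαpos : ∀ k, 0 < αs k)
    (hδ0 : Tendsto δ atTop (nhds 0)) (hα0 : Tendsto αs atTop (nhds 0))
    (hrate : Tendsto (fun k => δ k ^ 2 / αs k) atTop (nhds 0))
    (y : Y) (hy : y ∈ LinearMap.range (A : X →ₗ[ℝ] Y))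
    (αt : ℝ) (hαt : 0 < αt) (w0 : lp (fun _ : Λ => ℝ) 2)
    (hw0 : ∀ l, φ αt (κ l) (w0 l) = ⟪y, v l⟫)
    (yk : ℕ → Y) (hyk : ∀ k, ‖yk k - y‖ ≤ δ k) :
    ∃ hck : ∀ k, Memℓp (fun l => φ (αs k) (κ l) ⟪yk k, v l⟫ / κ l) 2,
      ∀ xp : X, xp ∈ (LinearMap.ker (A : X →ₗ[ℝ] Y))ᗮ → A xp = y →
        ∀ w : X,
          Tendsto
            (fun k =>
              ⟪T (⟨fun l => φ (αs k) (κ l) ⟪yk k, v l⟫ / κ l, hck k⟩ :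
                lp (fun _ : Λ => ℝ) 2), w⟫)
            atTop (nhds ⟪xp, w⟫) :=
  statement11_general A u ubar v κ hκpos hu_frame hv_mem hv_frame hquasi T hT hdual φ hfilter hB δ
    αs hαpos hα0 hrate y yk hyk
end
end
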